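/- Let a, b, c ∈ G∖N with a + b = c. Then: (1) if d(a*, b*) > 2, then N(c) ⊆ N(a) ∩ N(b); (2) if d(a*, b*) > 2 and d(a*, c*) > 2, then N(b) = N(c) ⊆ N(a) ∩ N(−a); (3) if d(a*, b*) > 4, then either N(a) = N(c) ⊆ N(b) ∩ N(−b), or N(b) = N(c) ⊆ N(a) ∩ N(−a). -/

import Mathlib

/-!
Write `x ~ y` when `x*` and `y*` commute. The basic observation is that `a ~ a + n` for every
`n ∈ N`, because `a n⁻¹` commutes with `a n⁻¹ + 1`. So if `c + n` and `n` lie in `N` but `a + n`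
does not, then `u = a + n` satisfies `a ~ u` and, since `b = -u + (c + n)` and `-1 ∈ N`,
`u ~ b`; thus `a* - u* - b*` is a path of length two in `Δ`. Hence `d(a*, b*) > 2` forces
`N(c) ⊆ N(a) ∩ N(b)`. Part (2) applies this also to `c + (-a) = b`, and part (3) follows
from (2) because `d(a*, b*) > 4` forces `d(a*, c*) > 2` or `d(b*, c*) > 2`.
-/

open scoped Pointwise

/-- The subset of `D` consisting of (the values of) the units belonging to `N`. -/
def unitsSet {D : Type*} [DivisionRing D] (N : Subgroup Dˣ) : Set D :=
  Units.val '' (N : Set Dˣ)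

/-- For `a : D`, the set `N(a) = {n ∈ N : a + n ∈ N}`. -/
def nSet {D : Type*} [DivisionRing D] (N : Subgroup Dˣ) (a : D) : Set D :=
  {x : D | x ∈ unitsSet N ∧ a + x ∈ unitsSet N}

/-- The commuting graph of a group: vertices are the nonidentity elements,
two distinct nonidentity elements are adjacent iff they commute. (The identity is
an isolated vertex.) -/
def commGraph (Q : Type*) [Group Q] : SimpleGraph Q where
  Adj a b := a ≠ b ∧ a ≠ 1 ∧ b ≠ 1 ∧ a * b = b * a
  symm := by
    constructor
    intro a b h
    exact ⟨Ne.symm h.1, h.2.2.1, h.2.1, h.2.2.2.symm⟩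
  loopless := by constructor; intro a h; exact h.1 rfl

/-- `distGT Γ u v k` : there is no path (walk) of length at most `k` from `u` to `v`,
i.e. `d(u,v) > k`. -/
def distGT {Q : Type*} (Γ : SimpleGraph Q) (u v : Q) (k : ℕ) : Prop :=
  ∀ p : Γ.Walk u v, k < p.length

open QuotientGroup

section Graph

variable {Q : Type*}

lemma distGT.symm {Γ : SimpleGraph Q} {u v : Q} {k : ℕ} (h : distGT Γ u v k) :
    distGT Γ v u k := fun p => p.length_reverse ▸ h p.reverse

lemma distGT.mono {Γ : SimpleGraph Q} {u v : Q} {k l : ℕ} (h : distGT Γ u v l) (hkl : k ≤ l) :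
    distGT Γ u v k := fun p => hkl.trans_lt (h p)

lemma distGT.left_or_right {Γ : SimpleGraph Q} {u w : Q} {k l : ℕ}
    (h : distGT Γ u w (k + l)) (v : Q) : distGT Γ u v k ∨ distGT Γ v w l := by
  refine or_iff_not_imp_left.2 fun huv q => ?_
  obtain ⟨p, hp⟩ : ∃ p : Γ.Walk u v, p.length ≤ k := by simpa [distGT] using huv
  have := h (p.append q)
  rw [SimpleGraph.Walk.length_append] at this
  omega

variable [Group Q]

lemma commGraph.exists_walk_length_le_one {x y : Q} (hx : x ≠ 1) (hy : y ≠ 1)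
    (hxy : Commute x y) : ∃ p : (commGraph Q).Walk x y, p.length ≤ 1 := by
  by_cases heq : x = y
  · subst heq
    exact ⟨.nil, zero_le_one⟩
  · exact ⟨.cons ⟨heq, hx, hy, hxy⟩ .nil, le_rfl⟩

lemma commGraph.exists_walk_length_le_two {x u y : Q} (hx : x ≠ 1) (hu : u ≠ 1) (hy : y ≠ 1)
    (hxu : Commute x u) (huy : Commute u y) : ∃ p : (commGraph Q).Walk x y, p.length ≤ 2 := by
  obtain ⟨p, hp⟩ := exists_walk_length_le_one hx hu hxu
  obtain ⟨q, hq⟩ := exists_walk_length_le_one hu hy huy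
  exact ⟨p.append q, by rw [SimpleGraph.Walk.length_append]; omega⟩

end Graph

section DivisionRing

variable {D : Type*} [DivisionRing D] {N : Subgroup Dˣ}

lemma val_mem_unitsSet_iff {u : Dˣ} : (u : D) ∈ unitsSet N ↔ u ∈ N :=
  Units.val_injective.mem_set_image

lemma neg_one_mem_of_center_subset (hF : ∀ x : Dˣ, (x : D) ∈ Set.center D → x ∈ N) :
    (-1 : Dˣ) ∈ N :=
  hF _ (Semigroup.mem_center_iff.mpr fun g => by simp)

lemma neg_mem_iff_of_neg_one_mem (hneg : (-1 : Dˣ) ∈ N) {u : Dˣ} : -u ∈ N ↔ u ∈ N := by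
  rw [← neg_one_mul u, N.mul_mem_cancel_left hneg]

variable [N.Normal]

lemma mk_neg_of_neg_one_mem (hneg : (-1 : Dˣ) ∈ N) (u : Dˣ) :
    (mk (-u) : Dˣ ⧸ N) = mk u := by
  rw [← neg_one_mul u, mk_mul, (eq_one_iff _).2 hneg, one_mul]

lemma commute_mk_of_val_eq_add {a n u : Dˣ} (hn : n ∈ N) (hu : (u : D) = a + n) :
    Commute (mk a : Dˣ ⧸ N) (mk u) := by
  have hval : ((u * n⁻¹ : Dˣ) : D) = (a * n⁻¹ : Dˣ) + 1 := by
    push_cast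
    rw [hu, add_mul, mul_inv_cancel₀ n.ne_zero]
  have hcomm : Commute (a * n⁻¹) (u * n⁻¹) :=
    Units.ext <| by
      rw [Units.val_mul (a * n⁻¹), Units.val_mul (u * n⁻¹), hval, mul_add, add_mul, mul_one,
        one_mul]
  have hmk (x : Dˣ) : (mk (x * n⁻¹) : Dˣ ⧸ N) = mk x := by
    rw [mk_mul, (eq_one_iff _).2 (N.inv_mem hn), mul_one]
  simpa only [mk'_apply, hmk] using hcomm.map (mk' N)

lemma add_mem_unitsSet_of_distGT_two (hneg : (-1 : Dˣ) ∈ N) {a b n m : Dˣ}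
    (ha : a ∉ N) (hb : b ∉ N) (hn : n ∈ N) (hm : m ∈ N) (hsum : (a : D) + b + n = m)
    (hd : distGT (commGraph (Dˣ ⧸ N)) (mk a) (mk b) 2) :
    (a : D) + n ∈ unitsSet N := by
  have h0 : (a : D) + n ≠ 0 := fun h0 => by
    have han : a = -n := Units.ext (by rw [Units.val_neg]; exact eq_neg_of_add_eq_zero_left h0)
    exact ha (han ▸ (neg_mem_iff_of_neg_one_mem hneg).2 hn)
  set u : Dˣ := Units.mk0 _ h0
  have hu : (u : D) = a + n := rfl
  rw [← hu, val_mem_unitsSet_iff]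
  by_contra huN
  have hau : Commute (mk a : Dˣ ⧸ N) (mk u) := commute_mk_of_val_eq_add hn hu
  have hub : Commute (mk u : Dˣ ⧸ N) (mk b) := by
    have hb_eq : (b : D) = (-u : Dˣ) + m := by
      rw [Units.val_neg, hu, ← hsum]
      abel
    simpa only [mk_neg_of_neg_one_mem hneg] using commute_mk_of_val_eq_add hm hb_eq
  obtain ⟨p, hp⟩ := commGraph.exists_walk_length_le_two
    (mt (eq_one_iff a).1 ha) (mt (eq_one_iff u).1 huN) (mt (eq_one_iff b).1 hb) hau hub
  exact absurd (hd p) (by omega)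

lemma nSet_subset_inter_of_distGT_two (hneg : (-1 : Dˣ) ∈ N) {a b c : Dˣ}
    (ha : a ∉ N) (hb : b ∉ N) (habc : (a : D) + b = c)
    (hd : distGT (commGraph (Dˣ ⧸ N)) (mk a) (mk b) 2) :
    nSet N c ⊆ nSet N a ∩ nSet N b := by
  rintro _ ⟨⟨n, hn, rfl⟩, ⟨m, hm, hmv⟩⟩
  have hsum : (a : D) + b + n = m := by rw [habc, hmv]
  exact ⟨⟨⟨n, hn, rfl⟩, add_mem_unitsSet_of_distGT_two hneg ha hb hn hm hsum hd⟩,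
    ⟨⟨n, hn, rfl⟩, add_mem_unitsSet_of_distGT_two hneg hb ha hn hm
      (by rw [← hsum, add_comm (b : D)]) hd.symm⟩⟩

lemma nSet_eq_and_subset_of_distGT_two (hneg : (-1 : Dˣ) ∈ N) {a b c : Dˣ}
    (ha : a ∉ N) (hb : b ∉ N) (hc : c ∉ N) (habc : (a : D) + b = c)
    (hab : distGT (commGraph (Dˣ ⧸ N)) (mk a) (mk b) 2)
    (hac : distGT (commGraph (Dˣ ⧸ N)) (mk a) (mk c) 2) :
    nSet N b = nSet N c ∧ nSet N c ⊆ nSet N a ∩ nSet N (-(a : D)) := by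
  have hsub := nSet_subset_inter_of_distGT_two hneg ha hb habc hab
  have hsub' : nSet N b ⊆ nSet N c ∩ nSet N (-(a : D)) := by
    have hcab : (c : D) + (-a : Dˣ) = b := by
      rw [Units.val_neg, ← habc]
      abel
    have hca : distGT (commGraph (Dˣ ⧸ N)) (mk c) (mk (-a)) 2 := by
      rw [mk_neg_of_neg_one_mem hneg]
      exact hac.symm
    simpa only [Units.val_neg] using nSet_subset_inter_of_distGT_two hneg hc
      (mt (neg_mem_iff_of_neg_one_mem hneg).1 ha) hcab hca
  exact ⟨(hsub'.trans Set.inter_subset_left).antisymm (hsub.trans Set.inter_subset_right),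
    fun x hx => ⟨(hsub hx).1, (hsub' (hsub hx).2).2⟩⟩

end DivisionRing

theorem stmt_4_general {D : Type*} [DivisionRing D] (N : Subgroup Dˣ)
    [N.Normal] (hF : ∀ x : Dˣ, (x : D) ∈ Set.center D → x ∈ N)
    (a b c : Dˣ) (ha : a ∉ N) (hb : b ∉ N) (hc : c ∉ N)
    (habc : (a : D) + (b : D) = (c : D)) :
    -- (1)
    (distGT (commGraph (Dˣ ⧸ N)) (QuotientGroup.mk a) (QuotientGroup.mk b) 2 →
      nSet N (c : D) ⊆ nSet N (a : D) ∩ nSet N (b : D)) ∧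
    -- (2)
    (distGT (commGraph (Dˣ ⧸ N)) (QuotientGroup.mk a) (QuotientGroup.mk b) 2 →
      distGT (commGraph (Dˣ ⧸ N)) (QuotientGroup.mk a) (QuotientGroup.mk c) 2 →
      nSet N (b : D) = nSet N (c : D) ∧
        nSet N (c : D) ⊆ nSet N (a : D) ∩ nSet N (-(a : D))) ∧
    -- (3)
    (distGT (commGraph (Dˣ ⧸ N)) (QuotientGroup.mk a) (QuotientGroup.mk b) 4 →
      (nSet N (a : D) = nSet N (c : D) ∧
        nSet N (c : D) ⊆ nSet N (b : D) ∩ nSet N (-(b : D))) ∨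
      (nSet N (b : D) = nSet N (c : D) ∧
        nSet N (c : D) ⊆ nSet N (a : D) ∩ nSet N (-(a : D)))) := by
  have hneg := neg_one_mem_of_center_subset hF
  refine ⟨nSet_subset_inter_of_distGT_two hneg ha hb habc,
    nSet_eq_and_subset_of_distGT_two hneg ha hb hc habc, fun hd4 => ?_⟩
  have hd2 : distGT (commGraph (Dˣ ⧸ N)) (mk a) (mk b) 2 := hd4.mono (by norm_num)
  rcases hd4.left_or_right (k := 2) (l := 2) (mk c) with hac | hcb
  · exact Or.inr (nSet_eq_and_subset_of_distGT_two hneg ha hb hc habc hd2 hac)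
  · exact Or.inl (nSet_eq_and_subset_of_distGT_two hneg hb ha hc
      (by rw [add_comm, habc]) hd2.symm hcb.symm)

/-- Let `a, b, c ∈ G∖N` with `a + b = c`. Then (1)–(3) as in
Lemma 2.3 of the paper. -/
theorem stmt_4 {D : Type*} [DivisionRing D] [Infinite D] (N : Subgroup Dˣ)
    [N.Normal] (hF : ∀ x : Dˣ, (x : D) ∈ Set.center D → x ∈ N)
    (hfin : Finite (Dˣ ⧸ N))
    (a b c : Dˣ) (ha : a ∉ N) (hb : b ∉ N) (hc : c ∉ N)
    (habc : (a : D) + (b : D) = (c : D)) :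
    -- (1)
    (distGT (commGraph (Dˣ ⧸ N)) (QuotientGroup.mk a) (QuotientGroup.mk b) 2 →
      nSet N (c : D) ⊆ nSet N (a : D) ∩ nSet N (b : D)) ∧
    -- (2)
    (distGT (commGraph (Dˣ ⧸ N)) (QuotientGroup.mk a) (QuotientGroup.mk b) 2 →
      distGT (commGraph (Dˣ ⧸ N)) (QuotientGroup.mk a) (QuotientGroup.mk c) 2 →
      nSet N (b : D) = nSet N (c : D) ∧
        nSet N (c : D) ⊆ nSet N (a : D) ∩ nSet N (-(a : D))) ∧
    -- (3)
    (distGT (commGraph (Dˣ ⧸ N)) (QuotientGroup.mk a) (QuotientGroup.mk b) 4 →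
      (nSet N (a : D) = nSet N (c : D) ∧
        nSet N (c : D) ⊆ nSet N (b : D) ∩ nSet N (-(b : D))) ∨
      (nSet N (b : D) = nSet N (c : D) ∧
        nSet N (c : D) ⊆ nSet N (a : D) ∩ nSet N (-(a : D)))) :=
  stmt_4_general N hF a b c ha hb hc habc
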